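/- Let T(N,t) be the regular Turán graph with equal parts P_1,...,P_t. In any FAT coloring of T(N,t), one Turán part is monochromatic (contained in a single coloring class) if and only if every Turán part is monochromatic. -/

import Mathlib

open Finset
open scoped Classical

/-- A FAT `k`-coloring of `G`. -/
def IsFATColoring {V : Type*} [Fintype V] (G : SimpleGraph V) (k : ℕ)
    (c : V → Fin k) (α : ℝ) : Prop :=
  Function.Surjective c ∧ 0 ≤ α ∧ α ≤ 1 ∧
    ∀ v : V, ∀ i : Fin k,
      ((((G.neighborFinset v).filter (fun w => c w = i)).card : ℝ)) =
        (if c v = i then 1 - ((k : ℝ) - 1) * α else α) * (G.degree v : ℝ)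

/-- The FAT chromatic number: the largest `k` such that `G` admits a FAT `k`-coloring. -/
noncomputable def fatChromatic {V : Type*} [Fintype V] (G : SimpleGraph V) : ℕ :=
  sSup {k | ∃ c : V → Fin k, ∃ α : ℝ, IsFATColoring G k c α}

/-- The regular Turán graph with `t` parts of size `n`: vertices `(g, x) : Fin t × Fin n`,
adjacent iff they lie in different parts (different first coordinates).
The part `P_g` is `{a | a.1 = g}`. -/
def regTuran (t n : ℕ) : SimpleGraph (Fin t × Fin n) :=
  SimpleGraph.fromRel (fun a b => a.1 ≠ b.1)

lemma regTuran_neighborFinset (t n : ℕ) (u : Fin t × Fin n) :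
    (regTuran t n).neighborFinset u = univ.filter (fun b => b.1 ≠ u.1) := by
  ext b
  rw [SimpleGraph.mem_neighborFinset]
  simp only [SimpleGraph.mem_neighborFinset, regTuran, SimpleGraph.fromRel_adj,
    mem_filter, mem_univ, true_and, ne_eq]
  constructor
  · rintro ⟨_, h | h⟩ <;> intro he <;> [exact h he.symm; exact h he]
  · intro hb
    exact ⟨fun he => hb (by rw [he]), Or.inr hb⟩

lemma part_card (t n : ℕ) (g0 : Fin t) :
    (univ.filter (fun b : Fin t × Fin n => b.1 = g0)).card = n := by
  have : (univ.filter (fun b : Fin t × Fin n => b.1 = g0)) = {g0} ×ˢ univ := by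
    ext b
    simp only [mem_filter, mem_univ, true_and, Finset.mem_product, Finset.mem_singleton]
    exact ⟨fun hb => ⟨hb, trivial⟩, fun hb => hb.1⟩
  rw [this]; simp

lemma regTuran_degree (t n : ℕ) (u : Fin t × Fin n) :
    (regTuran t n).degree u = t * n - n := by
  rw [← SimpleGraph.card_neighborFinset_eq_degree, regTuran_neighborFinset]
  have h1 := Finset.card_filter_add_card_filter_not
    (s := (univ : Finset (Fin t × Fin n))) (p := fun b => b.1 = u.1)
  have h2 := part_card t n u.1
  have h3 : (univ : Finset (Fin t × Fin n)).card = t * n := by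
    simp [Fintype.card_prod]
  have h4 : (univ.filter (fun b : Fin t × Fin n => b.1 ≠ u.1)).card
      = (univ.filter (fun b : Fin t × Fin n => ¬ b.1 = u.1)).card := rfl
  rw [h4]
  omega

lemma split_card (t n k : ℕ) (c : Fin t × Fin n → Fin k) (i : Fin k) (g0 : Fin t) :
    (univ.filter fun b : Fin t × Fin n => b.1 ≠ g0 ∧ c b = i).card
      + (univ.filter fun b : Fin t × Fin n => b.1 = g0 ∧ c b = i).card
      = (univ.filter fun b : Fin t × Fin n => c b = i).card := by
  rw [← Finset.card_filter_add_card_filter_not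
        (s := univ.filter fun b : Fin t × Fin n => c b = i) (p := fun b => b.1 = g0),
      Finset.filter_filter, Finset.filter_filter]
  simp only [and_comm, ne_eq]
  ring

lemma key (t n k : ℕ) (hn : 0 < n) (c : Fin t × Fin n → Fin k) (α : ℝ)
    (h : IsFATColoring (regTuran t n) k c α) (g s : Fin t) (hgs : g ≠ s) (i : Fin k)
    (hg : ∀ a : Fin t × Fin n, a.1 = g → c a = i) :
    ∃ j : Fin k, ∀ a : Fin t × Fin n, a.1 = s → c a = j := by
  obtain ⟨x0, -⟩ := Finset.card_pos.mp (by simp [hn] : 0 < (univ : Finset (Fin n)).card)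
  set u0 : Fin t × Fin n := (s, x0) with hu0
  refine ⟨c u0, fun a ha => ?_⟩
  by_contra hne
  -- degrees
  have hd0 : 0 < (regTuran t n).degree u0 := by
    rw [SimpleGraph.degree_pos_iff_exists_adj]
    refine ⟨(g, x0), ?_⟩
    have hsg : (u0.1 : Fin t) ≠ ((g, x0) : Fin t × Fin n).1 := fun he => hgs he.symm
    exact (SimpleGraph.fromRel_adj _ _ _).mpr ⟨fun he => hsg (by rw [he]), Or.inl hsg⟩
  have hdeq : ∀ v w : Fin t × Fin n, (regTuran t n).degree v = (regTuran t n).degree w := by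
    intro v w; rw [regTuran_degree, regTuran_degree]
  set d : ℝ := ((regTuran t n).degree u0 : ℝ) with hdd
  have hdne : d ≠ 0 := by
    simp only [hdd, ne_eq, Nat.cast_eq_zero]
    omega
  -- counting helper
  have hcount : ∀ v : Fin t × Fin n, ∀ j : Fin k,
      (((univ.filter fun b : Fin t × Fin n => b.1 ≠ v.1 ∧ c b = j).card : ℝ))
        = (if c v = j then 1 - ((k : ℝ) - 1) * α else α) * d := by
    intro v j
    have := h.2.2.2 v j
    rw [regTuran_neighborFinset, Finset.filter_filter] at this
    rw [this, hdeq v u0]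
  -- degeneracy: a and u0 are in the same part s with different colors
  have ha1 : a.1 = u0.1 := by rw [ha]
  have hdeg1 := hcount a (c a)
  have hdeg2 := hcount u0 (c a)
  rw [if_pos rfl] at hdeg1
  rw [if_neg (fun he => hne he.symm)] at hdeg2
  rw [ha1] at hdeg1
  have heq : 1 - ((k : ℝ) - 1) * α = α := by
    have := hdeg1.symm.trans hdeg2
    exact mul_right_cancel₀ hdne this
  -- pick a vertex in part s whose color is not i
  obtain ⟨u, hus, hui⟩ : ∃ u : Fin t × Fin n, u.1 = s ∧ c u ≠ i := by
    by_cases hci : c u0 = i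
    · exact ⟨a, ha, fun he => hne (he.trans hci.symm)⟩
    · exact ⟨u0, rfl, hci⟩
  set w : Fin t × Fin n := (g, x0) with hw
  have hwc : c w = i := hg w rfl
  have h1 := hcount w i
  have h2 := hcount u i
  rw [if_pos hwc, heq] at h1
  rw [if_neg hui, hus] at h2
  have hcards : (univ.filter fun b : Fin t × Fin n => b.1 ≠ g ∧ c b = i).card
      = (univ.filter fun b : Fin t × Fin n => b.1 ≠ s ∧ c b = i).card := by
    have : ((univ.filter fun b : Fin t × Fin n => b.1 ≠ g ∧ c b = i).card : ℝ)
        = ((univ.filter fun b : Fin t × Fin n => b.1 ≠ s ∧ c b = i).card : ℝ) := by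
      rw [show (g, x0).1 = g from rfl] at h1
      rw [h1, h2]
    exact_mod_cast this
  have hgfull : (univ.filter fun b : Fin t × Fin n => b.1 = g ∧ c b = i)
      = (univ.filter fun b : Fin t × Fin n => b.1 = g) := by
    ext b
    simp only [mem_filter, mem_univ, true_and]
    exact ⟨fun hb => hb.1, fun hb => ⟨hb, hg b hb⟩⟩
  have hsplitg := split_card t n k c i g
  have hsplits := split_card t n k c i s
  have hscard : (univ.filter fun b : Fin t × Fin n => b.1 = s ∧ c b = i).card = n := by
    have hg2 : (univ.filter fun b : Fin t × Fin n => b.1 = g ∧ c b = i).card = n := by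
      rw [hgfull, part_card]
    omega
  have hfull : (univ.filter fun b : Fin t × Fin n => b.1 = s ∧ c b = i)
      = (univ.filter fun b : Fin t × Fin n => b.1 = s) := by
    apply Finset.eq_of_subset_of_card_le
    · intro b hb
      simp only [mem_filter, mem_univ, true_and] at hb ⊢
      exact hb.1
    · rw [hscard, part_card]
  have humem : u ∈ (univ.filter fun b : Fin t × Fin n => b.1 = s) := by
    simp [hus]
  rw [← hfull] at humem
  simp only [mem_filter] at humem
  exact hui humem.2.2

theorem turan_mono_iff_all_mono (N t : ℕ) (ht : 0 < t) (hdvd : t ∣ N)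
    (k : ℕ) (c : Fin t × Fin (N / t) → Fin k) (α : ℝ)
    (h : IsFATColoring (regTuran t (N / t)) k c α)
    (g s : Fin t) :
    (∃ i : Fin k, ∀ a : Fin t × Fin (N / t), a.1 = g → c a = i) ↔
      (∃ i : Fin k, ∀ a : Fin t × Fin (N / t), a.1 = s → c a = i) := by
  rcases eq_or_ne g s with rfl | hgs
  · rfl
  rcases Nat.eq_zero_or_pos (N / t) with hn | hn
  · constructor <;>
      (rintro ⟨i, -⟩; exact ⟨i, fun a _ => absurd a.2.isLt (by omega)⟩)
  constructor
  · rintro ⟨i, hi⟩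
    exact key t (N / t) k hn c α h g s hgs i hi
  · rintro ⟨i, hi⟩
    exact key t (N / t) k hn c α h s g hgs.symm i hi
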